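/- Commuting let out of an application preserves typing: if Γ; Δ, Δ', Δ'' ⊢ (let x:_Δ σ = e₁ in e₂) e₃ : φ, then Γ; Δ, Δ', Δ'' ⊢ let x:_Δ σ = e₁ in (e₂ e₃) : φ. Similarly, commuting let-let: if Γ; Δ, Δ', Δ'' ⊢ let x:_{Δ,Δ'} σ' = (let y:_Δ σ = e₁ in e₂) in e₃ : φ, then Γ; Δ, Δ', Δ'' ⊢ let y:_Δ σ = e₁ in (let x:_{Δ,Δ'} σ' = e₂ in e₃) : φ. -/

import Mathlib

/-! # Linear Core (λ^π_Δ): syntax and typing -/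

abbrev Name := String

inductive Mult : Type
  | one | many | mvar (p : Name)
deriving DecidableEq

inductive Ty : Type
  | data (T : Name) (ms : List Mult)
  | arrow (a : Ty) (π : Mult) (b : Ty)
  | forallM (p : Name) (t : Ty)
  | tensor (a b : Ty)
  | unit
deriving DecidableEq

def Mult.msubst (m : Mult) (p : Name) (π : Mult) : Mult :=
  match m with
  | .mvar q => if q = p then π else .mvar q
  | m => m

def Ty.msubst : Ty → Name → Mult → Ty
  | .data T ms, p, π => .data T (ms.map (Mult.msubst · p π))
  | .arrow a m b, p, π => .arrow (a.msubst p π) (m.msubst p π) (b.msubst p π)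
  | .forallM q t, p, π => if q = p then .forallM q t else .forallM q (t.msubst p π)
  | .tensor a b, p, π => .tensor (a.msubst p π) (b.msubst p π)
  | .unit, _, _ => .unit

/-- An entry of the linear typing context: a (possibly irrelevant, possibly
tagged with a constructor name and linear-field index) linear resource. -/
structure LEntry : Type where
  name : Name
  ty : Ty
  irr : Bool := false
  tag : Option (Name × Nat) := none
deriving DecidableEq

abbrev LCtx := List LEntry

/-- `[Δ]` : pointwise irrelevant lifting of a linear context. -/
def LCtx.irrelevant (Δ : LCtx) : LCtx := Δ.map fun en => { en with irr := true }

def LCtx.names (Δ : LCtx) : List Name := Δ.map LEntry.name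

/-- `Δ[Δrep/x]` : replace the occurrences of `x` in `Δ` by `Δrep`. -/
def LCtx.substVar (Δ : LCtx) (x : Name) (Δrep : LCtx) : LCtx :=
  Δ.foldr (fun en acc => (if en.name = x then Δrep else [en]) ++ acc) []

/-- `u[x/Δ]` : collapse occurrences of the variables of `Δ` in `u` to `x`. -/
def LCtx.collapse (u : LCtx) (Δ : LCtx) (x : Name) (σ : Ty) : LCtx :=
  if Δ.any (fun d => u.any (fun en => en.name == d.name)) then
    (u.filter (fun en => ! Δ.any (fun d => d.name == en.name))) ++ [⟨x, σ, false, none⟩]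
  else u

def LCtx.removeNames (Δ : LCtx) (ns : List Name) : LCtx :=
  Δ.filter (fun en => ! ns.contains en.name)

/-- Flatten a list of linear contexts `Δ₁,…,Δₙ` into one. -/
def LCtx.flats (Δs : List LCtx) : LCtx := Δs.foldr (· ++ ·) []

/-- Entries of the unrestricted context Γ: unrestricted variables,
Δ-bound variables (annotated with a usage environment) and multiplicity
variables. -/
inductive GEntry : Type
  | unr (x : Name) (σ : Ty)
  | dlt (x : Name) (Δ : LCtx) (σ : Ty)
  | mvar (p : Name)
deriving DecidableEq

abbrev GCtx := List GEntry

/-- `Γ[Δ/x]` : expand occurrences of `x` inside usage environments in `Γ`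
into the linear variables of `Δ`. -/
def GCtx.expandVar (Γ : GCtx) (x : Name) (Δ : LCtx) : GCtx :=
  Γ.map fun g => match g with
    | .dlt y u σ => .dlt y (LCtx.substVar u x Δ) σ
    | g => g

/-- `Γ[x/Δ]` : collapse occurrences of the variables of `Δ` inside usage
environments in `Γ` to the single variable `x`. -/
def GCtx.collapse (Γ : GCtx) (Δ : LCtx) (x : Name) (σx : Ty) : GCtx :=
  Γ.map fun g => match g with
    | .dlt y u σ => .dlt y (LCtx.collapse u Δ x σx) σ
    | g => g

/-- `Γ[·/Δs]_z` : delete the variables of `Δs` from the usage environment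
of `z` in `Γ`. -/
def GCtx.zeroUsage (Γ : GCtx) (z : Name) (ns : List Name) : GCtx :=
  Γ.map fun g => match g with
    | .dlt y u σ => if y = z then .dlt y (LCtx.removeNames u ns) σ else .dlt y u σ
    | g => g

/-- Case patterns: wildcard, or a constructor pattern binding fields with
their multiplicities and types. -/
inductive Pat : Type
  | wild
  | con (K : Name) (fields : List (Name × Mult × Ty))

inductive Expr : Type
  | var (x : Name)
  | con (K : Name) (args : List (Mult × Expr))
  | lam (x : Name) (π : Mult) (σ : Ty) (body : Expr)
  | app (f a : Expr)
  | mlam (p : Name) (body : Expr)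
  | mapp (f : Expr) (π : Mult)
  | lett (x : Name) (Δ : LCtx) (σ : Ty) (rhs body : Expr)
  | letrec (binds : List (Name × LCtx × Ty × Expr)) (body : Expr)
  | cse (scrut : Expr) (z : Name) (Δz : LCtx) (σ : Ty) (alts : List (Pat × Expr))
  | pair (a b : Expr)
  | unit

mutual
/-- Capture-avoiding-enough substitution `e[e'/x]` (stops under shadowing binders). -/
def Expr.subst : Expr → Name → Expr → Expr
  | .var y, x, e' => if y = x then e' else .var y
  | .con K args, x, e' => .con K (substArgs args x e')
  | .lam y π σ b, x, e' => if y = x then .lam y π σ b else .lam y π σ (b.subst x e')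
  | .app f a, x, e' => .app (f.subst x e') (a.subst x e')
  | .mlam p b, x, e' => .mlam p (b.subst x e')
  | .mapp f π, x, e' => .mapp (f.subst x e') π
  | .lett y Δ σ r b, x, e' =>
      .lett y Δ σ (r.subst x e') (if y = x then b else b.subst x e')
  | .letrec binds b, x, e' => .letrec (substBinds binds x e') (b.subst x e')
  | .cse s z Δz σ alts, x, e' =>
      .cse (s.subst x e') z Δz σ (if z = x then alts else substAlts alts x e')
  | .pair a b, x, e' => .pair (a.subst x e') (b.subst x e')
  | .unit, _, _ => .unit

def substArgs : List (Mult × Expr) → Name → Expr → List (Mult × Expr)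
  | [], _, _ => []
  | (m, e) :: rest, x, e' => (m, e.subst x e') :: substArgs rest x e'

def substBinds : List (Name × LCtx × Ty × Expr) → Name → Expr → List (Name × LCtx × Ty × Expr)
  | [], _, _ => []
  | (y, Δ, σ, e) :: rest, x, e' => (y, Δ, σ, e.subst x e') :: substBinds rest x e'

def substAlts : List (Pat × Expr) → Name → Expr → List (Pat × Expr)
  | [], _, _ => []
  | (ρ, e) :: rest, x, e' => (ρ, e.subst x e') :: substAlts rest x e'
end

/-- Iterated substitution. -/
def Expr.substList (e : Expr) (ss : List (Name × Expr)) : Expr :=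
  ss.foldl (fun acc s => Expr.subst acc s.1 s.2) e

mutual
/-- Multiplicity substitution `e[π/p]`. -/
def Expr.msubst : Expr → Name → Mult → Expr
  | .var y, _, _ => .var y
  | .con K args, p, π => .con K (msubstArgs args p π)
  | .lam y m σ b, p, π => .lam y (m.msubst p π) (σ.msubst p π) (b.msubst p π)
  | .app f a, p, π => .app (f.msubst p π) (a.msubst p π)
  | .mlam q b, p, π => if q = p then .mlam q b else .mlam q (b.msubst p π)
  | .mapp f m, p, π => .mapp (f.msubst p π) (m.msubst p π)
  | .lett y Δ σ r b, p, π => .lett y Δ (σ.msubst p π) (r.msubst p π) (b.msubst p π)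
  | .letrec binds b, p, π => .letrec (msubstBinds binds p π) (b.msubst p π)
  | .cse s z Δz σ alts, p, π => .cse (s.msubst p π) z Δz (σ.msubst p π) (msubstAlts alts p π)
  | .pair a b, p, π => .pair (a.msubst p π) (b.msubst p π)
  | .unit, _, _ => .unit

def msubstArgs : List (Mult × Expr) → Name → Mult → List (Mult × Expr)
  | [], _, _ => []
  | (m, e) :: rest, p, π => (m.msubst p π, e.msubst p π) :: msubstArgs rest p π

def msubstBinds : List (Name × LCtx × Ty × Expr) → Name → Mult → List (Name × LCtx × Ty × Expr)
  | [], _, _ => []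
  | (y, Δ, σ, e) :: rest, p, π => (y, Δ, σ.msubst p π, e.msubst p π) :: msubstBinds rest p π

def msubstAlts : List (Pat × Expr) → Name → Mult → List (Pat × Expr)
  | [], _, _ => []
  | (ρ, e) :: rest, p, π => (ρ, e.msubst p π) :: msubstAlts rest p π
end

mutual
/-- Free variables of an expression. -/
def Expr.fv : Expr → List Name
  | .var x => [x]
  | .con _ args => fvArgs args
  | .lam x _ _ b => b.fv.filter (fun n => n ≠ x)
  | .app f a => f.fv ++ a.fv
  | .mlam _ b => b.fv
  | .mapp f _ => f.fv
  | .lett x _ _ r b => r.fv ++ b.fv.filter (fun n => n ≠ x)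
  | .letrec binds b => fvBinds binds ++ b.fv
  | .cse s z _ _ alts => s.fv ++ (fvAlts alts).filter (fun n => n ≠ z)
  | .pair a b => a.fv ++ b.fv
  | .unit => []

def fvArgs : List (Mult × Expr) → List Name
  | [] => []
  | (_, e) :: rest => e.fv ++ fvArgs rest

def fvBinds : List (Name × LCtx × Ty × Expr) → List Name
  | [] => []
  | (_, _, _, e) :: rest => e.fv ++ fvBinds rest

def fvAlts : List (Pat × Expr) → List Name
  | [] => []
  | (_, e) :: rest => e.fv ++ fvAlts rest
end

/-- Weak head normal forms. -/
def Expr.isWHNF : Expr → Prop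
  | .lam _ _ _ _ => True
  | .mlam _ _ => True
  | .con _ _ => True
  | .pair _ _ => True
  | .unit => True
  | _ => False

/-- Does a pattern match a (WHNF) expression? -/
def Pat.matchesE : Pat → Expr → Prop
  | .wild, _ => True
  | .con K fs, .con K' args => K = K' ∧ fs.length = args.length
  | .con _ _, _ => False

/-- Well-formedness of multiplicities: `1`, `ω`, or an in-scope multiplicity variable. -/
inductive MultWF : GCtx → Mult → Prop
  | one {Γ} : MultWF Γ .one
  | many {Γ} : MultWF Γ .many
  | mvar {Γ p} : GEntry.mvar p ∈ Γ → MultWF Γ (.mvar p)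

/-- The mode of the case-alternative judgement: scrutinee in WHNF (⇒_WHNF)
or not in WHNF (⇒_NWHNF). Mode-agnostic rules are stated for both modes. -/
inductive AltMode : Type
  | whnf | nwhnf
deriving DecidableEq

def Pat.linFieldsCount : Pat → Nat
  | .wild => 0
  | .con _ fs => (fs.filter fun f => f.2.1 == Mult.one).length

mutual
/-- The typing judgement `Γ; Δ ⊢ e : σ` of Linear Core. -/
inductive Typed : GCtx → LCtx → Expr → Ty → Prop
  | var1 (Γ : GCtx) (x : Name) (σ : Ty) :
      Typed Γ [⟨x, σ, false, none⟩] (.var x) σ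
  | varw {Γ x σ} : GEntry.unr x σ ∈ Γ → Typed Γ [] (.var x) σ
  | vard {Γ x Δ σ} : GEntry.dlt x Δ σ ∈ Γ → Typed Γ Δ (.var x) σ
  | split {Γ : GCtx} {Δ₁ Δ₂ : LCtx} {e σ} (en : LEntry) (K : Name) (n : Nat) :
      en.tag = none →
      Typed Γ (Δ₁ ++ ((List.range n).map fun i => { en with tag := some (K, i) }) ++ Δ₂) e σ →
      Typed Γ (Δ₁ ++ en :: Δ₂) e σ
  | lamI1 {Γ Δ x σ e φ} :
      Typed Γ (Δ ++ [⟨x, σ, false, none⟩]) e φ →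
      Typed Γ Δ (.lam x .one σ e) (.arrow σ .one φ)
  | lamIw {Γ Δ x σ e φ} :
      Typed (Γ ++ [.unr x σ]) Δ e φ →
      Typed Γ Δ (.lam x .many σ e) (.arrow σ .many φ)
  | lamIp {Γ Δ x σ e φ p} :
      Typed Γ (Δ ++ [⟨x, σ, false, none⟩]) e φ →
      Typed Γ Δ (.lam x (.mvar p) σ e) (.arrow σ (.mvar p) φ)
  | appE1 {Γ Δ₁ Δ₂ e e' σ φ} :
      Typed Γ Δ₁ e (.arrow σ .one φ) → Typed Γ Δ₂ e' σ →
      Typed Γ (Δ₁ ++ Δ₂) (.app e e') φ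
  | appEw {Γ Δ e e' σ φ} :
      Typed Γ Δ e (.arrow σ .many φ) → Typed Γ [] e' σ →
      Typed Γ Δ (.app e e') φ
  | appEp {Γ Δ₁ Δ₂ e e' σ φ p} :
      Typed Γ Δ₁ e (.arrow σ (.mvar p) φ) → Typed Γ Δ₂ e' σ →
      Typed Γ (Δ₁ ++ Δ₂) (.app e e') φ
  | mlamI {Γ Δ p e σ} :
      Typed (Γ ++ [.mvar p]) Δ e σ →
      Typed Γ Δ (.mlam p e) (.forallM p σ)
  | mappE {Γ Δ p e σ π} :
      Typed Γ Δ e (.forallM p σ) → MultWF Γ π →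
      Typed Γ Δ (.mapp e π) (Ty.msubst σ p π)
  | unitI {Γ} : Typed Γ [] .unit .unit
  | pairI {Γ Δ₁ Δ₂ a b σ τ} :
      Typed Γ Δ₁ a σ → Typed Γ Δ₂ b τ →
      Typed Γ (Δ₁ ++ Δ₂) (.pair a b) (.tensor σ τ)
  | lett {Γ Δ Δ' x σ e e' φ} :
      Typed Γ Δ e σ →
      Typed (Γ ++ [.dlt x Δ σ]) (Δ ++ Δ') e' φ →
      Typed Γ (Δ ++ Δ') (.lett x Δ σ e e') φ
  | letrec {Γ : GCtx} {Δ Δ' : LCtx} {binds : List (Name × LCtx × Ty × Expr)} {e' φ} :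
      (∀ b ∈ binds, b.2.1 = Δ) →
      (∀ b ∈ binds,
        Typed (Γ ++ binds.map fun bi => GEntry.dlt bi.1 bi.2.1 bi.2.2.1) Δ b.2.2.2 b.2.2.1) →
      Typed (Γ ++ binds.map fun bi => GEntry.dlt bi.1 bi.2.1 bi.2.2.1) (Δ ++ Δ') e' φ →
      Typed Γ (Δ ++ Δ') (.letrec binds e') φ
  | caseWHNF {Γ : GCtx} {Δ Δ' : LCtx} {e z σ φ alts} (Δs : List LCtx) :
      Expr.isWHNF e →
      TypedWHNF Γ Δ e σ Δs →
      (∀ a ∈ alts, Pat.matchesE a.1 e →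
        TypedAlt (Γ ++ [GEntry.dlt z Δ σ]) (Δ ++ Δ') a.1 a.2 z Δs σ φ .whnf) →
      (∀ a ∈ alts, ¬ Pat.matchesE a.1 e →
        TypedAlt (Γ ++ [GEntry.dlt z (LCtx.irrelevant Δ) σ])
          (LCtx.irrelevant Δ ++ Δ') a.1 a.2 z [LCtx.irrelevant Δ] σ φ .nwhnf) →
      Typed Γ (Δ ++ Δ') (.cse e z Δ σ alts) φ
  | caseNWHNF {Γ : GCtx} {Δ Δ' : LCtx} {e z σ φ alts} :
      ¬ Expr.isWHNF e →
      Typed Γ Δ e σ →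
      (∀ a ∈ alts,
        TypedAlt (Γ ++ [GEntry.dlt z (LCtx.irrelevant Δ) σ])
          (LCtx.irrelevant Δ ++ Δ') a.1 a.2 z [LCtx.irrelevant Δ] σ φ .nwhnf) →
      Typed Γ (LCtx.irrelevant Δ ++ Δ') (.cse e z (LCtx.irrelevant Δ) σ alts) φ

/-- The WHNF typing judgement `Γ; Δ ⊩ e : σ ▷ Δ̄`, splitting the linear
resources among the sub-expressions of an expression in WHNF. -/
inductive TypedWHNF : GCtx → LCtx → Expr → Ty → List LCtx → Prop
  | lam {Γ Δ x π σ e τ} :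
      Typed Γ Δ (.lam x π σ e) τ → TypedWHNF Γ Δ (.lam x π σ e) τ [Δ]
  | con {Γ K args τ Δs} :
      ArgsTyped Γ args Δs →
      TypedWHNF Γ (LCtx.flats Δs) (.con K args) τ Δs

/-- Typing of constructor arguments: unrestricted arguments need the empty
linear context, each linear argument gets its own `Δᵢ`. -/
inductive ArgsTyped : GCtx → List (Mult × Expr) → List LCtx → Prop
  | nil {Γ} : ArgsTyped Γ [] []
  | unr {Γ e σ args Δs} :
      Typed Γ [] e σ → ArgsTyped Γ args Δs → ArgsTyped Γ ((.many, e) :: args) Δs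
  | lin {Γ Δ e σ args Δs} :
      Typed Γ Δ e σ → ArgsTyped Γ args Δs → ArgsTyped Γ ((.one, e) :: args) (Δ :: Δs)

/-- The case-alternative judgement `Γ; Δ ⊢ ρ ⇒ e :^z_{Δ̄} σ ⇒ φ` of Linear
Core (the `Δ̄ : List LCtx` is the annotated scrutinee environment: the split
`Δ₁,…,Δₙ` in WHNF mode, the singleton `[[Δ]]` in non-WHNF mode). -/
inductive TypedAlt : GCtx → LCtx → Pat → Expr → Name → List LCtx → Ty → Ty → AltMode → Prop
  | wild {Γ Δ e z Δs σ φ m} :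
      Typed Γ Δ e φ →
      TypedAlt Γ Δ .wild e z Δs σ φ m
  | alt0 {Γ Δ e z Δs σ φ m K fields} :
      (∀ f ∈ fields, f.2.1 = Mult.many) →
      Typed ((GCtx.zeroUsage Γ z (LCtx.names (LCtx.flats Δs)))
               ++ fields.map fun f => GEntry.unr f.1 f.2.2)
            (LCtx.removeNames Δ (LCtx.names (LCtx.flats Δs))) e φ →
      TypedAlt Γ Δ (.con K fields) e z Δs σ φ m
  | altNwhnf {Γ Δ e z Δs σ φ K fields} :
      0 < (fields.filter fun f => f.2.1 == Mult.one).length →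
      (fields.filter fun f => f.2.1 == Mult.one).length = Δs.length →
      Typed (Γ ++ (fields.filter fun f => f.2.1 == Mult.many).map (fun f => GEntry.unr f.1 f.2.2)
               ++ (List.zip (fields.filter fun f => f.2.1 == Mult.one) Δs).map
                    (fun fd => GEntry.dlt fd.1.1 fd.2 fd.1.2.2))
            Δ e φ →
      TypedAlt Γ Δ (.con K fields) e z Δs σ φ .whnf
  | altNnwhnf {Γ Δ e z Δs σ φ K fields} :
      0 < (fields.filter fun f => f.2.1 == Mult.one).length →
      Typed (Γ ++ (fields.filter fun f => f.2.1 == Mult.many).map (fun f => GEntry.unr f.1 f.2.2)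
               ++ ((fields.filter fun f => f.2.1 == Mult.one).zipIdx.map Prod.swap).map
                    (fun fi => GEntry.dlt fi.2.1
                       ((LCtx.flats Δs).map fun en => { en with tag := some (K, fi.1) })
                       fi.2.2.2))
            Δ e φ →
      TypedAlt Γ Δ (.con K fields) e z Δs σ φ .nwhnf
end


private theorem MultWF.weaken_insert {Γ₁ Γ₂ gs : GCtx} {π : Mult}
    (h : MultWF (Γ₁ ++ Γ₂) π) : MultWF (Γ₁ ++ gs ++ Γ₂) π := by
  cases h with
  | one => exact .one
  | many => exact .many
  | mvar hm => refine .mvar ?_; simp [List.mem_append] at hm ⊢; tauto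

private theorem Typed.weaken_insert {Γ Δ e σ} (h : Typed Γ Δ e σ) :
    ∀ Γ₁ Γ₂ gs, Γ = Γ₁ ++ Γ₂ → Typed (Γ₁ ++ gs ++ Γ₂) Δ e σ := by
  refine Typed.rec
    (motive_1 := fun Γ Δ e σ _ => ∀ Γ₁ Γ₂ gs, Γ = Γ₁ ++ Γ₂ → Typed (Γ₁ ++ gs ++ Γ₂) Δ e σ)
    (motive_2 := fun Γ Δ e σ Δs _ => ∀ Γ₁ Γ₂ gs, Γ = Γ₁ ++ Γ₂ → TypedWHNF (Γ₁ ++ gs ++ Γ₂) Δ e σ Δs)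
    (motive_3 := fun Γ args Δs _ => ∀ Γ₁ Γ₂ gs, Γ = Γ₁ ++ Γ₂ → ArgsTyped (Γ₁ ++ gs ++ Γ₂) args Δs)
    (motive_4 := fun Γ Δ ρ e z Δs σ φ m _ => ∀ Γ₁ Γ₂ gs, Γ = Γ₁ ++ Γ₂ → TypedAlt (Γ₁ ++ gs ++ Γ₂) Δ ρ e z Δs σ φ m)
    ?_ ?_ ?_ ?_ ?_ ?_ ?_ ?_ ?_ ?_ ?_ ?_ ?_ ?_ ?_ ?_ ?_ ?_ ?_ ?_ ?_ ?_ ?_ ?_ ?_ ?_ ?_ h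
  -- var1
  · intro Γ x σ Γ₁ Γ₂ gs _
    exact Typed.var1 _ x σ
  -- varw
  · intro Γ x σ hx Γ₁ Γ₂ gs hΓ
    subst hΓ
    refine Typed.varw ?_
    simp [List.mem_append] at hx ⊢; tauto
  -- vard
  · intro Γ x Δ σ hx Γ₁ Γ₂ gs hΓ
    subst hΓ
    refine Typed.vard ?_
    simp [List.mem_append] at hx ⊢; tauto
  -- split
  · intro Γ Δ₁ Δ₂ e σ en K n htag hp ih Γ₁ Γ₂ gs hΓ
    exact Typed.split en K n htag (ih Γ₁ Γ₂ gs hΓ)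
  -- lamI1
  · intro Γ Δ x σ e φ hp ih Γ₁ Γ₂ gs hΓ
    exact Typed.lamI1 (ih Γ₁ Γ₂ gs hΓ)
  -- lamIw
  · intro Γ Δ x σ e φ hp ih Γ₁ Γ₂ gs hΓ
    subst hΓ
    refine Typed.lamIw ?_
    have := ih Γ₁ (Γ₂ ++ [GEntry.unr x σ]) gs (by simp)
    simpa using this
  -- lamIp
  · intro Γ Δ x σ e φ p hp ih Γ₁ Γ₂ gs hΓ
    exact Typed.lamIp (ih Γ₁ Γ₂ gs hΓ)
  -- appE1
  · intro Γ Δ₁ Δ₂ e e' σ φ h1 h2 ih1 ih2 Γ₁ Γ₂ gs hΓ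
    exact Typed.appE1 (ih1 Γ₁ Γ₂ gs hΓ) (ih2 Γ₁ Γ₂ gs hΓ)
  -- appEw
  · intro Γ Δ e e' σ φ h1 h2 ih1 ih2 Γ₁ Γ₂ gs hΓ
    exact Typed.appEw (ih1 Γ₁ Γ₂ gs hΓ) (ih2 Γ₁ Γ₂ gs hΓ)
  -- appEp
  · intro Γ Δ₁ Δ₂ e e' σ φ p h1 h2 ih1 ih2 Γ₁ Γ₂ gs hΓ
    exact Typed.appEp (ih1 Γ₁ Γ₂ gs hΓ) (ih2 Γ₁ Γ₂ gs hΓ)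
  -- mlamI
  · intro Γ Δ p e σ hp ih Γ₁ Γ₂ gs hΓ
    subst hΓ
    refine Typed.mlamI ?_
    have := ih Γ₁ (Γ₂ ++ [GEntry.mvar p]) gs (by simp)
    simpa using this
  -- mappE
  · intro Γ Δ p e σ π h1 hwf ih Γ₁ Γ₂ gs hΓ
    subst hΓ
    exact Typed.mappE (ih Γ₁ Γ₂ gs rfl) (MultWF.weaken_insert hwf)
  -- unitI
  · intro Γ Γ₁ Γ₂ gs _
    exact Typed.unitI
  -- pairI
  · intro Γ Δ₁ Δ₂ a b σ τ h1 h2 ih1 ih2 Γ₁ Γ₂ gs hΓ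
    exact Typed.pairI (ih1 Γ₁ Γ₂ gs hΓ) (ih2 Γ₁ Γ₂ gs hΓ)
  -- lett
  · intro Γ Δ Δ' x σ e e' φ h1 h2 ih1 ih2 Γ₁ Γ₂ gs hΓ
    subst hΓ
    refine Typed.lett (ih1 Γ₁ Γ₂ gs rfl) ?_
    have := ih2 Γ₁ (Γ₂ ++ [GEntry.dlt x Δ σ]) gs (by simp)
    simpa using this
  -- letrec
  · intro Γ Δ Δ' binds e' φ hΔ hbs he' ihb ihe Γ₁ Γ₂ gs hΓ
    subst hΓ
    refine Typed.letrec hΔ (fun b hb => ?_) ?_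
    · have := ihb b hb Γ₁ (Γ₂ ++ binds.map fun bi => GEntry.dlt bi.1 bi.2.1 bi.2.2.1) gs (by simp)
      simpa using this
    · have := ihe Γ₁ (Γ₂ ++ binds.map fun bi => GEntry.dlt bi.1 bi.2.1 bi.2.2.1) gs (by simp)
      simpa using this
  -- caseWHNF
  · intro Γ Δ Δ' e z σ φ alts Δs hwhnf hW h1 h2 ihW ih1 ih2 Γ₁ Γ₂ gs hΓ
    subst hΓ
    refine Typed.caseWHNF Δs hwhnf (ihW Γ₁ Γ₂ gs rfl) (fun a ha hm => ?_) (fun a ha hm => ?_)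
    · have := ih1 a ha hm Γ₁ (Γ₂ ++ [GEntry.dlt z Δ σ]) gs (by simp)
      simpa using this
    · have := ih2 a ha hm Γ₁ (Γ₂ ++ [GEntry.dlt z (LCtx.irrelevant Δ) σ]) gs (by simp)
      simpa using this
  -- caseNWHNF
  · intro Γ Δ Δ' e z σ φ alts hnw he halts ihe ihalts Γ₁ Γ₂ gs hΓ
    subst hΓ
    refine Typed.caseNWHNF hnw (ihe Γ₁ Γ₂ gs rfl) (fun a ha => ?_)
    have := ihalts a ha Γ₁ (Γ₂ ++ [GEntry.dlt z (LCtx.irrelevant Δ) σ]) gs (by simp)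
    simpa using this
  -- TypedWHNF.lam
  · intro Γ Δ x π σ e τ hT ihT Γ₁ Γ₂ gs hΓ
    exact TypedWHNF.lam (ihT Γ₁ Γ₂ gs hΓ)
  -- TypedWHNF.con
  · intro Γ K args τ Δs hA ihA Γ₁ Γ₂ gs hΓ
    exact TypedWHNF.con (ihA Γ₁ Γ₂ gs hΓ)
  -- ArgsTyped.nil
  · intro Γ Γ₁ Γ₂ gs _
    exact ArgsTyped.nil
  -- ArgsTyped.unr
  · intro Γ e σ args Δs hT hA ihT ihA Γ₁ Γ₂ gs hΓ
    exact ArgsTyped.unr (ihT Γ₁ Γ₂ gs hΓ) (ihA Γ₁ Γ₂ gs hΓ)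
  -- ArgsTyped.lin
  · intro Γ Δ e σ args Δs hT hA ihT ihA Γ₁ Γ₂ gs hΓ
    exact ArgsTyped.lin (ihT Γ₁ Γ₂ gs hΓ) (ihA Γ₁ Γ₂ gs hΓ)
  -- TypedAlt.wild
  · intro Γ Δ e z Δs σ φ m hT ihT Γ₁ Γ₂ gs hΓ
    exact TypedAlt.wild (ihT Γ₁ Γ₂ gs hΓ)
  -- TypedAlt.alt0
  · intro Γ Δ e z Δs σ φ m K fields hmany hT ihT Γ₁ Γ₂ gs hΓ
    subst hΓ
    refine TypedAlt.alt0 hmany ?_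
    have := ihT (GCtx.zeroUsage Γ₁ z (LCtx.names (LCtx.flats Δs)))
      (GCtx.zeroUsage Γ₂ z (LCtx.names (LCtx.flats Δs)) ++ fields.map fun f => GEntry.unr f.1 f.2.2)
      (GCtx.zeroUsage gs z (LCtx.names (LCtx.flats Δs)))
      (by simp [GCtx.zeroUsage])
    simpa [GCtx.zeroUsage] using this
  -- TypedAlt.altNwhnf
  · intro Γ Δ e z Δs σ φ K fields h0 hlen hT ihT Γ₁ Γ₂ gs hΓ
    subst hΓ
    refine TypedAlt.altNwhnf h0 hlen ?_
    have := ihT Γ₁ (Γ₂ ++ ((fields.filter fun f => f.2.1 == Mult.many).map fun f => GEntry.unr f.1 f.2.2)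
        ++ ((List.zip (fields.filter fun f => f.2.1 == Mult.one) Δs).map
              fun fd => GEntry.dlt fd.1.1 fd.2 fd.1.2.2)) gs (by simp)
    simpa using this
  -- TypedAlt.altNnwhnf
  · intro Γ Δ e z Δs σ φ K fields h0 hT ihT Γ₁ Γ₂ gs hΓ
    subst hΓ
    refine TypedAlt.altNnwhnf h0 ?_
    have := ihT Γ₁ (Γ₂ ++ ((fields.filter fun f => f.2.1 == Mult.many).map fun f => GEntry.unr f.1 f.2.2)
        ++ (((fields.filter fun f => f.2.1 == Mult.one).zipIdx.map Prod.swap).map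
              fun fi => GEntry.dlt fi.2.1
                ((LCtx.flats Δs).map fun en => { en with tag := some (K, fi.1) }) fi.2.2.2)) gs (by simp)
    simpa using this
private theorem Typed.weaken_one {Γ Δ e σ} (h : Typed Γ Δ e σ) (g : GEntry) :
    Typed (Γ ++ [g]) Δ e σ := by
  have := Typed.weaken_insert h Γ [] [g] (by simp)
  simpa using this

/-- Inversion for `lett` (carrying `split`s into the body). -/
private theorem Typed.lett_inv {Γ M f σ'} (h : Typed Γ M f σ') :
    ∀ y Δ σ e1 e2, f = Expr.lett y Δ σ e1 e2 →
      Typed Γ Δ e1 σ ∧ Typed (Γ ++ [GEntry.dlt y Δ σ]) M e2 σ' := by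
  refine Typed.rec
    (motive_1 := fun Γ M f σ' _ => ∀ y Δ σ e1 e2, f = Expr.lett y Δ σ e1 e2 →
      Typed Γ Δ e1 σ ∧ Typed (Γ ++ [GEntry.dlt y Δ σ]) M e2 σ')
    (motive_2 := fun _ _ _ _ _ _ => True)
    (motive_3 := fun _ _ _ _ => True)
    (motive_4 := fun _ _ _ _ _ _ _ _ _ _ => True)
    ?_ ?_ ?_ ?sp ?_ ?_ ?_ ?_ ?_ ?_ ?_ ?_ ?_ ?_ ?lt ?_ ?_ ?_ ?_ ?_ ?_ ?_ ?_ ?_ ?_ ?_ ?_ h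
  case sp =>
    intro Γ Δ₁ Δ₂ e σ en K n htag hp ih y Δ σ₀ e1 e2 he
    subst he
    obtain ⟨h1, h2⟩ := ih y Δ σ₀ e1 e2 rfl
    exact ⟨h1, Typed.split en K n htag h2⟩
  case lt =>
    intro Γ Δ Δ' x σ e e' φ h1 h2 ih1 ih2 y Δ₀ σ₀ e1 e2 he
    injection he with hx hΔ hσ he1 he2
    subst hx; subst hΔ; subst hσ; subst he1; subst he2
    exact ⟨h1, h2⟩
  all_goals intros
  any_goals trivial
  all_goals (intro y Δ σ e1 e2 he; exact absurd he (by simp))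
/-- Commuting a `lett` out of the function position of an application,
given a typing of the `lett` at an arrow type. -/
private theorem Typed.lett_arrow_app {Γ L f τ} (h : Typed Γ L f τ) :
    ∀ x Δ σ e1 e2 σ0 m φ Δ₂ e3, Typed Γ Δ₂ e3 σ0 → (m = Mult.many → Δ₂ = []) →
      f = Expr.lett x Δ σ e1 e2 → τ = Ty.arrow σ0 m φ →
      Typed Γ (L ++ Δ₂) (Expr.lett x Δ σ e1 (Expr.app e2 e3)) φ := by
  refine Typed.rec
    (motive_1 := fun Γ L f τ _ => ∀ x Δ σ e1 e2 σ0 m φ Δ₂ e3,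
      Typed Γ Δ₂ e3 σ0 → (m = Mult.many → Δ₂ = []) →
      f = Expr.lett x Δ σ e1 e2 → τ = Ty.arrow σ0 m φ →
      Typed Γ (L ++ Δ₂) (Expr.lett x Δ σ e1 (Expr.app e2 e3)) φ)
    (motive_2 := fun _ _ _ _ _ _ => True)
    (motive_3 := fun _ _ _ _ => True)
    (motive_4 := fun _ _ _ _ _ _ _ _ _ _ => True)
    ?_ ?_ ?_ ?sp ?_ ?_ ?_ ?_ ?_ ?_ ?_ ?_ ?_ ?_ ?lt ?_ ?_ ?_ ?_ ?_ ?_ ?_ ?_ ?_ ?_ ?_ ?_ h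
  case sp =>
    intro Γ Δ₁' Δ₂' e σ en K n htag hp ih x Δ σ₀ e1 e2 σ0 m φ Δ₂ e3 he3 hm he hτ
    subst he; subst hτ
    have := ih x Δ σ₀ e1 e2 σ0 m φ Δ₂ e3 he3 hm rfl rfl
    have h2 := Typed.split (Γ := Γ) (Δ₁ := Δ₁') (Δ₂ := Δ₂' ++ Δ₂) en K n htag (by simpa using this)
    simpa using h2
  case lt =>
    intro Γ Δ Δ' x σ e e' φ h1 h2 ih1 ih2 x' Δ₀ σ₀ e1 e2 σ0 m φ' Δ₂ e3 he3 hm he hτ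
    injection he with hx hΔ hσ he1 he2
    subst hx; subst hΔ; subst hσ; subst he1; subst he2; subst hτ
    have he3' : Typed (Γ ++ [GEntry.dlt x Δ σ]) Δ₂ e3 σ0 := Typed.weaken_one he3 _
    cases m with
    | one =>
      have happ := Typed.appE1 h2 he3'
      have := Typed.lett (Δ' := Δ' ++ Δ₂) h1 (by simpa using happ)
      simpa using this
    | many =>
      have hΔ₂ : Δ₂ = [] := hm rfl
      subst hΔ₂
      have happ := Typed.appEw h2 he3'
      have := Typed.lett (Δ' := Δ') h1 happ
      simpa using this
    | mvar p =>
      have happ := Typed.appEp h2 he3'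
      have := Typed.lett (Δ' := Δ' ++ Δ₂) h1 (by simpa using happ)
      simpa using this
  all_goals intros
  any_goals trivial
  all_goals (intro x Δ σ e1 e2 σ0 m φ Δ₂ e3 he3 hm he hτ; exact absurd he (by simp))

/-- Part 1: commuting let out of an application. -/
private theorem Typed.commute_let_app {Γ L f φ} (h : Typed Γ L f φ) :
    ∀ x Δ σ e1 e2 e3, f = Expr.app (Expr.lett x Δ σ e1 e2) e3 →
      Typed Γ L (Expr.lett x Δ σ e1 (Expr.app e2 e3)) φ := by
  refine Typed.rec
    (motive_1 := fun Γ L f φ _ => ∀ x Δ σ e1 e2 e3,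
      f = Expr.app (Expr.lett x Δ σ e1 e2) e3 →
      Typed Γ L (Expr.lett x Δ σ e1 (Expr.app e2 e3)) φ)
    (motive_2 := fun _ _ _ _ _ _ => True)
    (motive_3 := fun _ _ _ _ => True)
    (motive_4 := fun _ _ _ _ _ _ _ _ _ _ => True)
    ?_ ?_ ?_ ?sp ?_ ?_ ?_ ?a1 ?aw ?ap ?_ ?_ ?_ ?_ ?_ ?_ ?_ ?_ ?_ ?_ ?_ ?_ ?_ ?_ ?_ ?_ ?_ h
  case sp =>
    intro Γ Δ₁ Δ₂ e σ en K n htag hp ih x Δ σ₀ e1 e2 e3 he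
    subst he
    exact Typed.split en K n htag (ih x Δ σ₀ e1 e2 e3 rfl)
  case a1 =>
    intro Γ Δ₁ Δ₂ e e' σ φ h1 h2 ih1 ih2 x Δ σ₀ e1 e2 e3 he
    injection he with hf ha
    subst hf; subst ha
    exact Typed.lett_arrow_app h1 x Δ σ₀ e1 e2 σ Mult.one φ Δ₂ e' h2 (by simp) rfl rfl
  case aw =>
    intro Γ Δ e e' σ φ h1 h2 ih1 ih2 x Δ₀ σ₀ e1 e2 e3 he
    injection he with hf ha
    subst hf; subst ha
    have := Typed.lett_arrow_app h1 x Δ₀ σ₀ e1 e2 σ Mult.many φ [] e' h2 (fun _ => rfl) rfl rfl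
    simpa using this
  case ap =>
    intro Γ Δ₁ Δ₂ e e' σ φ p h1 h2 ih1 ih2 x Δ σ₀ e1 e2 e3 he
    injection he with hf ha
    subst hf; subst ha
    exact Typed.lett_arrow_app h1 x Δ σ₀ e1 e2 σ (Mult.mvar p) φ Δ₂ e' h2 (by simp) rfl rfl
  all_goals intros
  any_goals trivial
  all_goals (intro x Δ σ e1 e2 e3 he; exact absurd he (by simp))

/-- Part 2: commuting let out of a let. -/
private theorem Typed.commute_let_let {Γ L f φ} (h : Typed Γ L f φ) :
    ∀ x Δ Δ' σ' y σ e1 e2 e3, f = Expr.lett x (Δ ++ Δ') σ' (Expr.lett y Δ σ e1 e2) e3 →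
      Typed Γ L (Expr.lett y Δ σ e1 (Expr.lett x (Δ ++ Δ') σ' e2 e3)) φ := by
  refine Typed.rec
    (motive_1 := fun Γ L f φ _ => ∀ x Δ Δ' σ' y σ e1 e2 e3,
      f = Expr.lett x (Δ ++ Δ') σ' (Expr.lett y Δ σ e1 e2) e3 →
      Typed Γ L (Expr.lett y Δ σ e1 (Expr.lett x (Δ ++ Δ') σ' e2 e3)) φ)
    (motive_2 := fun _ _ _ _ _ _ => True)
    (motive_3 := fun _ _ _ _ => True)
    (motive_4 := fun _ _ _ _ _ _ _ _ _ _ => True)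
    ?_ ?_ ?_ ?sp ?_ ?_ ?_ ?_ ?_ ?_ ?_ ?_ ?_ ?_ ?lt ?_ ?_ ?_ ?_ ?_ ?_ ?_ ?_ ?_ ?_ ?_ ?_ h
  case sp =>
    intro Γ Δ₁ Δ₂ e σ en K n htag hp ih x Δ Δ' σ' y σ₀ e1 e2 e3 he
    subst he
    exact Typed.split en K n htag (ih x Δ Δ' σ' y σ₀ e1 e2 e3 rfl)
  case lt =>
    intro Γ M Δr x σM er eb φ hD1 hD2 ih1 ih2 x' Δ Δ' σ' y σ₀ e1 e2 e3 he
    injection he with hx hM hσ hrhs hbody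
    subst hx; subst hσ; subst hrhs; subst hbody; subst hM
    obtain ⟨h1, h2⟩ := Typed.lett_inv hD1 y Δ σ₀ e1 e2 rfl
    have hD2' : Typed ((Γ ++ [GEntry.dlt y Δ σ₀]) ++ [GEntry.dlt x (Δ ++ Δ') σM])
        ((Δ ++ Δ') ++ Δr) eb φ := by
      have := Typed.weaken_insert hD2 Γ [GEntry.dlt x (Δ ++ Δ') σM] [GEntry.dlt y Δ σ₀] rfl
      simpa using this
    have hinner : Typed (Γ ++ [GEntry.dlt y Δ σ₀]) ((Δ ++ Δ') ++ Δr)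
        (Expr.lett x (Δ ++ Δ') σM e2 eb) φ := Typed.lett h2 hD2'
    have := Typed.lett (Δ' := Δ' ++ Δr) h1 (by simpa using hinner)
    simpa using this
  all_goals intros
  any_goals trivial
  all_goals (intro x Δ Δ' σ' y σ e1 e2 e3 he; exact absurd he (by simp))


/-- Commuting let-application and let-let preserve typing. -/
theorem commuting_let_app_and_let_let :
    (∀ (Γ : GCtx) (Δ Δ' Δ'' : LCtx) (x : Name) (σ φ : Ty) (e1 e2 e3 : Expr),
      Typed Γ (Δ ++ Δ' ++ Δ'')
        (Expr.app (Expr.lett x Δ σ e1 e2) e3) φ →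
      Typed Γ (Δ ++ Δ' ++ Δ'')
        (Expr.lett x Δ σ e1 (Expr.app e2 e3)) φ) ∧
    (∀ (Γ : GCtx) (Δ Δ' Δ'' : LCtx) (x y : Name) (σ σ' φ : Ty) (e1 e2 e3 : Expr),
      Typed Γ (Δ ++ Δ' ++ Δ'')
        (Expr.lett x (Δ ++ Δ') σ' (Expr.lett y Δ σ e1 e2) e3) φ →
      Typed Γ (Δ ++ Δ' ++ Δ'')
        (Expr.lett y Δ σ e1 (Expr.lett x (Δ ++ Δ') σ' e2 e3)) φ) :=
  ⟨fun _ _ _ _ x σ _ e1 e2 e3 h => Typed.commute_let_app h x _ σ e1 e2 e3 rfl,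
   fun _ _ _ _ x y σ σ' _ e1 e2 e3 h => Typed.commute_let_let h x _ _ σ' y σ e1 e2 e3 rfl⟩
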